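/- A connected finite graph G with ν(G) = d_max − 1, where d_max is the maximal vertex degree, is a complete graph on d_max + 1 vertices. -/

import Mathlib

/-!
Test `λ₁` against the function that is `1` at a vertex `x` and `conj (σ x v)` at neighbours `v`
of `x` forming an independent set `T`: the edges from `x` to `T` then carry no energy, and the
Rayleigh quotient is at most `((#T + 1) D - 2 #T) / (#T + 1)`. With `λ₁ = D - 1` this forces
`#T ≤ 1`, so every neighbourhood is a clique, and a connected graph with this property is
complete.
-/

open Finset

variable {V : Type*} [Fintype V] {W : Type*} [Fintype W]

open scoped Classical in
noncomputable def magEnergy (G : SimpleGraph V) (σ : V → V → ℂ) (f : V → ℂ) : ℝ :=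
  (1/2) * ∑ x : V, ∑ y : V, if G.Adj x y then ‖f x - σ x y * f y‖ ^ 2 else 0

noncomputable def magDenom (f : V → ℂ) : ℝ := ∑ x : V, ‖f x‖ ^ 2

noncomputable def lambda1 (G : SimpleGraph V) (σ : V → V → ℂ) : ℝ :=
  sInf { r : ℝ | ∃ f : V → ℂ, f ≠ 0 ∧ r = magEnergy G σ f / magDenom f }

def IsMagPotential (G : SimpleGraph V) (σ : V → V → ℂ) : Prop :=
  (∀ x y, G.Adj x y → ‖σ x y‖ = 1) ∧
  (∀ x y, G.Adj x y → σ y x = (σ x y)⁻¹)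

noncomputable def magHeight (G : SimpleGraph V) : ℝ :=
  sSup { r : ℝ | ∃ σ : V → V → ℂ, IsMagPotential G σ ∧ r = lambda1 G σ }

open scoped Classical in
noncomputable def magLap (G : SimpleGraph V) (σ : V → V → ℂ) (f : V → ℂ) : V → ℂ :=
  fun x => ∑ y : V, if G.Adj x y then f x - σ x y * f y else 0

lemma magEnergy_nonneg (G : SimpleGraph V) (σ : V → V → ℂ) (f : V → ℂ) :
    0 ≤ magEnergy G σ f := by
  unfold magEnergy
  refine mul_nonneg (by norm_num) (sum_nonneg fun x _ => sum_nonneg fun y _ => ?_)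
  split_ifs <;> positivity

section Rayleigh

variable {G : SimpleGraph V} {σ : V → V → ℂ} {f : V → ℂ}

lemma magDenom_pos (hf : f ≠ 0) : 0 < magDenom f := by
  obtain ⟨v, hv⟩ := Function.ne_iff.mp hf
  exact sum_pos' (fun x _ => by positivity) ⟨v, mem_univ v, pow_pos (norm_pos_iff.mpr hv) 2⟩

lemma lambda1_mul_magDenom_le (hf : f ≠ 0) : lambda1 G σ * magDenom f ≤ magEnergy G σ f := by
  have hbdd : BddBelow {r : ℝ | ∃ f : V → ℂ, f ≠ 0 ∧ r = magEnergy G σ f / magDenom f} := by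
    refine ⟨0, ?_⟩
    rintro r ⟨g, -, rfl⟩
    exact div_nonneg (magEnergy_nonneg G σ g) (sum_nonneg fun _ _ => by positivity)
  have := csInf_le hbdd ⟨f, hf, rfl⟩
  rwa [← lambda1, le_div_iff₀ (magDenom_pos hf)] at this

end Rayleigh

structure IsFlatOn (G : SimpleGraph V) (σ : V → V → ℂ) (S : Finset V) (f : V → ℂ) : Prop where
  eq_zero : ∀ v ∉ S, f v = 0
  norm_eq_one : ∀ v ∈ S, ‖f v‖ = 1
  eq_mul : ∀ u ∈ S, ∀ v ∈ S, G.Adj u v → f u = σ u v * f v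

namespace IsFlatOn

variable {G : SimpleGraph V} {σ : V → V → ℂ} {S : Finset V} {f : V → ℂ}

lemma magDenom_eq (hf : IsFlatOn G σ S f) : magDenom f = #S := by
  rw [magDenom, ← sum_subset (subset_univ S) fun v _ hv => by simp [hf.eq_zero v hv],
    sum_congr rfl fun v hv => by rw [hf.norm_eq_one v hv, one_pow]]
  simp

/-- An adjacent pair contributes `1` if exactly one of its ends lies in `S`, and `0` otherwise. -/
lemma magEnergy_eq [DecidableEq V] [DecidableRel G.Adj] (hσ : IsMagPotential G σ)
    (hf : IsFlatOn G σ S f) : magEnergy G σ f = ∑ u ∈ S, #(G.neighborFinset u \ S) := by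
  set b : V → V → ℝ := fun u v => if G.Adj u v ∧ u ∈ S ∧ v ∉ S then 1 else 0
  have hterm : magEnergy G σ f = 1 / 2 * ∑ u, ∑ v, (b u v + b v u) := by
    unfold magEnergy
    congr 1
    refine sum_congr rfl fun u _ => sum_congr rfl fun v _ => ?_
    by_cases hadj : G.Adj u v
    · by_cases hu : u ∈ S <;> by_cases hv : v ∈ S
      · simp [b, hadj, hu, hv, ← hf.eq_mul u hu v hv hadj]
      · simp [b, hadj, hu, hv, hf.eq_zero v hv, hf.norm_eq_one u hu]
      · simp [b, hadj, hadj.symm, hu, hv, hf.eq_zero u hu, hf.norm_eq_one v hv, hσ.1 u v hadj]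
      · simp [b, hadj, hu, hv, hf.eq_zero u hu, hf.eq_zero v hv]
    · simp [b, hadj, G.adj_comm v u]
  have hrow : ∀ u, ∑ v, b u v = if u ∈ S then (#(G.neighborFinset u \ S) : ℝ) else 0 := by
    intro u
    by_cases hu : u ∈ S
    · simp only [b, hu, true_and, if_true, sum_boole]
      congr 2; ext v; simp
    · simp [b, hu]
  simp only [hterm, sum_add_distrib]
  rw [sum_comm (f := fun u v => b v u)]
  simp only [hrow, sum_ite_mem, univ_inter, Nat.cast_sum]
  ring

lemma lambda1_mul_card_le [DecidableEq V] [DecidableRel G.Adj] (hσ : IsMagPotential G σ)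
    (hf : IsFlatOn G σ S f) (hS : S.Nonempty) :
    lambda1 G σ * #S ≤ ∑ u ∈ S, #(G.neighborFinset u \ S) := by
  have hf0 : f ≠ 0 := by
    obtain ⟨v, hv⟩ := hS
    exact fun h => by simpa [h] using hf.norm_eq_one v hv
  simpa [hf.magDenom_eq, hf.magEnergy_eq hσ] using lambda1_mul_magDenom_le (G := G) (σ := σ) hf0

end IsFlatOn

section Star

variable [DecidableEq V] {G : SimpleGraph V} {σ : V → V → ℂ} {x : V} {T : Finset V}

noncomputable def starFn (σ : V → V → ℂ) (x : V) (T : Finset V) : V → ℂ :=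
  fun v => if v = x then 1 else if v ∈ T then (σ x v)⁻¹ else 0

omit [Fintype V] in
lemma isFlatOn_starFn (hσ : IsMagPotential G σ) (hT : ∀ v ∈ T, G.Adj x v)
    (hind : G.IsIndepSet T) : IsFlatOn G σ (insert x T) (starFn σ x T) where
  eq_zero v hv := by
    rw [mem_insert, not_or] at hv
    simp [starFn, hv.1, hv.2]
  norm_eq_one v hv := by
    rcases mem_insert.mp hv with rfl | hvT
    · simp [starFn]
    · have hvx : v ≠ x := (hT v hvT).ne'
      simp [starFn, hvx, hvT, hσ.1 x v (hT v hvT)]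
  eq_mul u hu v hv huv := by
    have hσ0 : ∀ w ∈ T, σ x w ≠ 0 := fun w hw h0 => by simpa [h0] using hσ.1 x w (hT w hw)
    rcases mem_insert.mp hu with rfl | huT <;> rcases mem_insert.mp hv with rfl | hvT
    · exact absurd huv G.irrefl
    · simp [starFn, huv.ne', hvT, hσ0 v hvT]
    · simp [starFn, huv.ne, huT, hσ.2 v u huv.symm]
    · exact absurd huv (hind huT hvT (fun h => G.irrefl (h ▸ huv)))

lemma sum_card_neighborFinset_sdiff_insert_add_le [DecidableRel G.Adj] {D : ℕ}
    (hdeg : ∀ u, G.degree u ≤ D) (hT : ∀ v ∈ T, G.Adj x v) :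
    ∑ u ∈ insert x T, #(G.neighborFinset u \ insert x T) + 2 * #T ≤ (#T + 1) * D := by
  have hx : x ∉ T := fun h => G.irrefl (hT x h)
  set S := insert x T
  have hsplit : ∀ u, #(G.neighborFinset u \ S) + #(G.neighborFinset u ∩ S) ≤ D := fun u => by
    rw [card_sdiff_add_card_inter, G.card_neighborFinset_eq_degree]; exact hdeg u
  have hx_inter : #T ≤ #(G.neighborFinset x ∩ S) :=
    card_le_card fun v hv => mem_inter.mpr ⟨(G.mem_neighborFinset x v).mpr (hT v hv),
      mem_insert_of_mem hv⟩
  have hT_inter : ∀ u ∈ T, 1 ≤ #(G.neighborFinset u ∩ S) := fun u hu =>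
    card_pos.mpr ⟨x, mem_inter.mpr ⟨(G.mem_neighborFinset u x).mpr (hT u hu).symm,
      mem_insert_self x T⟩⟩
  have hT_sum : ∑ u ∈ T, (#(G.neighborFinset u \ S) + 1) ≤ #T * D := by
    simpa using sum_le_sum fun u hu => (Nat.add_le_add_left (hT_inter u hu) _).trans (hsplit u)
  rw [sum_add_distrib, sum_const, smul_eq_mul, mul_one] at hT_sum
  rw [sum_insert hx]
  linarith [hsplit x]

lemma card_le_one_of_lambda1_eq [DecidableRel G.Adj] (hσ : IsMagPotential G σ) {D : ℕ}
    (hlam : lambda1 G σ = D - 1) (hdeg : ∀ u, G.degree u ≤ D) (hT : ∀ v ∈ T, G.Adj x v)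
    (hind : G.IsIndepSet T) : #T ≤ 1 := by
  have hx : x ∉ T := fun h => G.irrefl (hT x h)
  have hflat := (isFlatOn_starFn hσ hT hind).lambda1_mul_card_le hσ (insert_nonempty x T)
  have hcount := sum_card_neighborFinset_sdiff_insert_add_le hdeg hT
  rw [hlam, card_insert_of_notMem hx] at hflat
  have hcount' : ((∑ u ∈ insert x T, #(G.neighborFinset u \ insert x T) : ℕ) : ℝ) + 2 * #T
      ≤ (#T + 1) * D := by exact_mod_cast hcount
  have : (#T : ℝ) ≤ 1 := by push_cast at hflat hcount'; nlinarith
  exact_mod_cast this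

lemma isClique_neighborSet_of_lambda1_eq [DecidableRel G.Adj] (hσ : IsMagPotential G σ)
    {D : ℕ} (hlam : lambda1 G σ = D - 1) (hdeg : ∀ u, G.degree u ≤ D) (x : V) :
    G.IsClique (G.neighborSet x) := by
  intro y hy z hz hyz
  by_contra hadj
  have hind : G.IsIndepSet (({y, z} : Finset V) : Set V) := by
    rw [coe_pair]
    exact Set.pairwise_pair.mpr fun _ => ⟨hadj, fun h => hadj h.symm⟩
  have := card_le_one_of_lambda1_eq (T := {y, z}) hσ hlam hdeg (by simpa using ⟨hy, hz⟩) hind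
  rw [card_pair hyz] at this
  omega

end Star

lemma SimpleGraph.Connected.isUniversal_of_isClique_neighborSet {α : Type*}
    {G : SimpleGraph α} (hG : G.Connected) (h : ∀ x, G.IsClique (G.neighborSet x)) (x : α) :
    G.IsUniversal x := by
  intro w
  suffices w = x ∨ G.Adj x w from fun hxw => this.resolve_left hxw.symm
  induction (SimpleGraph.reachable_iff_reflTransGen x w).mp (hG x w) with
  | refl => exact Or.inl rfl
  | @tail b c _ hbc ih =>
    rcases ih with rfl | hxb
    · exact Or.inr hbc
    · by_cases hcx : c = x
      · exact Or.inl hcx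
      · exact Or.inr (h b hxb.symm hbc (Ne.symm hcx))

theorem magHeight_dmax_rigidity (G : SimpleGraph V) [DecidableRel G.Adj]
    (hconn : G.Connected)
    (hatt : ∃ σ : V → V → ℂ, IsMagPotential G σ ∧ lambda1 G σ = magHeight G)
    (D : ℕ) (hD : D = univ.sup fun x => G.degree x)
    (h : magHeight G = (D : ℝ) - 1) :
    G = ⊤ ∧ Fintype.card V = D + 1 := by
  classical
  obtain ⟨σ, hσ, hlam⟩ := hatt
  have hdeg : ∀ u, G.degree u ≤ D := fun u => hD ▸ le_sup (f := (G.degree ·)) (mem_univ u)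
  have huniv : ∀ x, G.IsUniversal x := hconn.isUniversal_of_isClique_neighborSet
    (isClique_neighborSet_of_lambda1_eq hσ (hlam.trans h) hdeg)
  have hcard : ∀ u, G.degree u = Fintype.card V - 1 :=
    fun u => (G.degree_eq_card_sub_one u).mpr (huniv u)
  have : Nonempty V := hconn.nonempty
  refine ⟨?_, ?_⟩
  · ext u v
    exact ⟨SimpleGraph.Adj.ne, fun huv => huniv u huv⟩
  · simp only [hcard, sup_const univ_nonempty] at hD
    have := Fintype.card_pos (α := V)
    omega
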